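/- For a finitely supported multi-index ν with |ν| ≥ 1, the sum over all multi-indices η with 0 < η ≤ ν of C(ν,η)·[1/2]_{|η|}·[1/2]_{|ν-η|} is at most 3·[1/2]_{|ν|}. -/

import Mathlib

/-!
Grouping the multi-indices `η ≤ ν` by `|η| = k` turns the sum into a one-variable one: by the
multi-index binomial theorem `∑_{η ≤ ν} C(ν,η) x^|η| = (1 + x)^|ν|`, the weights of the group
`|η| = k` add up to `C(|ν|,k)`. The Vandermonde identity for falling factorials then gives
`∑_k C(n,k) (1/2)_k (1/2)_{n-k} = (1)_n`, which vanishes for `n ≥ 2`. Since `(1/2)_k` has sign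
`(-1)^(k-1)` for `k ≥ 1`, all inner terms (`0 < k < n`) carry the same sign `(-1)^n`, opposite to
that of the two end terms `(1/2)_n`; hence the inner terms add up to `2 [1/2]_n`, and the sum over
`0 < η ≤ ν` equals `3 [1/2]_n`. For `n = 1` the sum is `1/2`.
-/

/-- `ffHalf n = |(1/2)_n|`, the absolute value of the falling factorial of `1/2`. -/
noncomputable def ffHalf (n : ℕ) : ℝ := |(descPochhammer ℝ n).eval (1/2 : ℝ)|

/-- degree `|ν|` of a multi-index: the sum of its entries. -/
def mdeg (ν : ℕ →₀ ℕ) : ℕ := ν.sum fun _ k => k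

/-- multi-index binomial coefficient `C(ν,η) = ∏_j C(ν_j, η_j)`. -/
def mchoose (ν η : ℕ →₀ ℕ) : ℕ := ∏ j ∈ ν.support, (ν j).choose (η j)

open Finset Polynomial

theorem Finsupp.sum_Icc_zero_prod_eq_prod_sum {ι R : Type*} [DecidableEq ι] [CommSemiring R]
    (ν : ι →₀ ℕ) (g : ι → ℕ → R) :
    ∑ η ∈ Icc 0 ν, ∏ j ∈ ν.support, g j (η j) = ∏ j ∈ ν.support, ∑ i ∈ Icc 0 (ν j), g j i := by
  rw [prod_sum, Finsupp.Icc_eq, support_zero, empty_union, Finset.finsupp, sum_map]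
  -- `Finset.finsupp` is built with classical decidable equality on `ι`
  refine Finset.sum_congr (by convert rfl using 2; rfl) fun p _ => ?_
  rw [← prod_attach]
  exact Finset.prod_congr rfl fun j _ => by simp

lemma mdeg_eq_degree (ν : ℕ →₀ ℕ) : mdeg ν = ν.degree := rfl

lemma mdeg_add_tsub {η ν : ℕ →₀ ℕ} (h : η ≤ ν) : mdeg η + mdeg (ν - η) = mdeg ν := by
  rw [mdeg_eq_degree, mdeg_eq_degree, mdeg_eq_degree, ← map_add, add_tsub_cancel_of_le h]

theorem sum_Icc_mchoose_mul_pow {R : Type*} [CommSemiring R] (ν : ℕ →₀ ℕ) (x : R) :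
    ∑ η ∈ Icc 0 ν, (mchoose ν η : R) * x ^ mdeg η = (1 + x) ^ mdeg ν := by
  have hterm : ∀ η ∈ Icc 0 ν,
      (mchoose ν η : R) * x ^ mdeg η = ∏ j ∈ ν.support, ((ν j).choose (η j) : R) * x ^ η j := by
    intro η hη
    have hsupp : η.support ⊆ ν.support := Finsupp.support_mono (mem_Icc.mp hη).2
    rw [mdeg, Finsupp.sum_of_support_subset η hsupp _ (fun _ _ => rfl), ← prod_pow_eq_pow_sum,
      mchoose, Nat.cast_prod, prod_mul_distrib]
  rw [sum_congr rfl hterm,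
    Finsupp.sum_Icc_zero_prod_eq_prod_sum ν fun j i => ((ν j).choose i : R) * x ^ i,
    mdeg, Finsupp.sum, ← prod_pow_eq_pow_sum]
  refine prod_congr rfl fun j _ => ?_
  rw [add_comm, add_pow, Nat.range_succ_eq_Icc_zero]
  exact sum_congr rfl fun i _ => by rw [one_pow, mul_one, mul_comm]

theorem sum_mchoose_filter_mdeg_eq_choose (ν : ℕ →₀ ℕ) (k : ℕ) :
    ∑ η ∈ Icc 0 ν with mdeg η = k, mchoose ν η = (mdeg ν).choose k := by
  have h := congrArg (coeff · k) (sum_Icc_mchoose_mul_pow ν (X : ℕ[X]))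
  simp only [finsetSum_coeff, ← C_eq_natCast, Nat.cast_id, coeff_C_mul_X_pow,
    coeff_one_add_X_pow] at h
  rw [← h, sum_filter]
  exact sum_congr rfl fun η _ => by simp only [eq_comm]

theorem sum_Icc_mchoose_mul_mul_eq_sum_antidiagonal {R : Type*} [CommSemiring R]
    (ν : ℕ →₀ ℕ) (f g : ℕ → R) :
    ∑ η ∈ Icc 0 ν, (mchoose ν η : R) * f (mdeg η) * g (mdeg (ν - η))
      = ∑ p ∈ antidiagonal (mdeg ν), ((mdeg ν).choose p.1 : R) * f p.1 * g p.2 := by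
  rw [← sum_fiberwise_of_maps_to (g := fun η => (mdeg η, mdeg (ν - η)))
    fun η hη => mem_antidiagonal.mpr (mdeg_add_tsub (mem_Icc.mp hη).2)]
  refine sum_congr rfl fun p hp => ?_
  have hfiber : {η ∈ Icc 0 ν | (mdeg η, mdeg (ν - η)) = p} = {η ∈ Icc 0 ν | mdeg η = p.1} := by
    refine filter_congr fun η hη => ?_
    have := mdeg_add_tsub (mem_Icc.mp hη).2
    have := mem_antidiagonal.mp hp
    rw [Prod.ext_iff]
    omega
  calc ∑ η ∈ Icc 0 ν with (mdeg η, mdeg (ν - η)) = p,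
          (mchoose ν η : R) * f (mdeg η) * g (mdeg (ν - η))
      = ∑ η ∈ Icc 0 ν with (mdeg η, mdeg (ν - η)) = p, (mchoose ν η : R) * f p.1 * g p.2 :=
        sum_congr rfl fun η hη => by rw [← (mem_filter.mp hη).2]
    _ = _ := by
      rw [← sum_mul, ← sum_mul, hfiber, ← Nat.cast_sum, sum_mchoose_filter_mdeg_eq_choose]

theorem descPochhammer_eval_add {R : Type*} [CommRing R] (n : ℕ) (r s : R) :
    (descPochhammer R n).eval (r + s) = ∑ p ∈ antidiagonal n,
      (n.choose p.1 : R) * ((descPochhammer R p.1).eval r * (descPochhammer R p.2).eval s) := by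
  have hsmeval (k : ℕ) (x : R) : (descPochhammer ℤ k).smeval x = (descPochhammer R k).eval x := by
    rw [← aeval_eq_smeval, aeval_def, ← eval_map, descPochhammer_map]
  simpa only [hsmeval] using Ring.descPochhammer_smeval_add n (Commute.all r s)

lemma ffHalf_zero : ffHalf 0 = 1 := by simp [ffHalf]

lemma descPochhammer_eval_half_succ (k : ℕ) :
    (descPochhammer ℝ (k + 1)).eval (1 / 2 : ℝ) = (-1) ^ k * ffHalf (k + 1) := by
  induction k with
  | zero => norm_num [ffHalf]
  | succ k ih =>
    have hstep : (descPochhammer ℝ (k + 2)).eval (1 / 2 : ℝ)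
        = (descPochhammer ℝ (k + 1)).eval (1 / 2) * -(k + 1 / 2) := by
      rw [descPochhammer_succ_right, eval_mul, eval_sub, eval_X, eval_natCast]
      push_cast
      ring
    have habs : ffHalf (k + 2) = ffHalf (k + 1) * (k + 1 / 2) := by
      rw [ffHalf, hstep, abs_mul, abs_neg, abs_of_pos (a := (k : ℝ) + 1 / 2) (by positivity)]
      rfl
    rw [hstep, ih, habs]
    ring

lemma sum_antidiagonal_choose_mul_ffHalf_add_two (m : ℕ) :
    ∑ p ∈ antidiagonal (m + 2), ((m + 2).choose p.1 : ℝ) * ffHalf p.1 * ffHalf p.2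
      = 4 * ffHalf (m + 2) := by
  have hvand := descPochhammer_eval_add (m + 2) (1 / 2 : ℝ) (1 / 2)
  have hmid : ∀ p ∈ antidiagonal m, ((m + 2).choose (p.1 + 1) : ℝ) *
      ((descPochhammer ℝ (p.1 + 1)).eval (1 / 2) * (descPochhammer ℝ (p.2 + 1)).eval (1 / 2))
        = (-1) ^ m * (((m + 2).choose (p.1 + 1) : ℝ) * ffHalf (p.1 + 1) * ffHalf (p.2 + 1)) := by
    intro p hp
    rw [descPochhammer_eval_half_succ, descPochhammer_eval_half_succ, ← mem_antidiagonal.mp hp,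
      pow_add]
    ring
  have hone : (descPochhammer ℝ (m + 2)).eval 1 = 0 := by
    simpa using descPochhammer_eval_eq_descFactorial ℝ 1 (m + 2)
  rw [add_halves, hone, Nat.antidiagonal_succ_succ', sum_cons, sum_cons, sum_map] at hvand
  rw [Nat.antidiagonal_succ_succ', sum_cons, sum_cons, sum_map]
  simp only [Function.Embedding.coe_prodMap, Function.Embedding.coeFn_mk, Prod.map_fst,
    Prod.map_snd, Nat.succ_eq_add_one] at hvand ⊢
  rw [sum_congr rfl hmid, ← mul_sum] at hvand
  simp only [Nat.choose_zero_right, Nat.choose_self, Nat.cast_one, descPochhammer_zero, eval_one,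
    ffHalf_zero, one_mul, mul_one, descPochhammer_eval_half_succ (m + 1)] at hvand ⊢
  rcases neg_one_pow_eq_or ℝ m with hm | hm <;> rw [pow_succ, hm] at hvand <;> linarith

lemma sum_antidiagonal_choose_mul_ffHalf_le {n : ℕ} (hn : 1 ≤ n) :
    ∑ p ∈ antidiagonal n, (n.choose p.1 : ℝ) * ffHalf p.1 * ffHalf p.2 ≤ 4 * ffHalf n := by
  obtain _ | _ | m := n
  · omega
  · norm_num [ffHalf, Nat.antidiagonal_succ]
  · exact (sum_antidiagonal_choose_mul_ffHalf_add_two m).le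

theorem ffHalf_multiindex_sum_le (ν : ℕ →₀ ℕ) (hν : 1 ≤ mdeg ν) :
    ∑ η ∈ Finset.Ioc 0 ν,
        (mchoose ν η : ℝ) * ffHalf (mdeg η) * ffHalf (mdeg (ν - η))
      ≤ 3 * ffHalf (mdeg ν) := by
  have h := sum_Icc_mchoose_mul_mul_eq_sum_antidiagonal ν ffHalf ffHalf
  rw [Icc_eq_cons_Ioc (zero_le : 0 ≤ ν), sum_cons] at h
  have hzero : (mchoose ν 0 : ℝ) * ffHalf (mdeg 0) * ffHalf (mdeg (ν - 0)) = ffHalf (mdeg ν) := by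
    simp [mchoose, mdeg, ffHalf_zero]
  linarith [sum_antidiagonal_choose_mul_ffHalf_le hν]
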